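/- In the three-level least squares setting with the given QR decompositions, for each 1 ≤ i ≤ m the sub-blocks of A⁻¹ satisfy A¹²ᶦ = −A¹¹ (Rᵢ⁻¹ C₁ᵢ)ᵀ and A²²ᶦ = Rᵢ⁻¹ (Rᵢ⁻ᵀ − C₁ᵢ A¹²ᶦ). -/

import Mathlib

open Matrix

/-- The three-level least-squares design matrix: row block `(i,j)` (of height
`oᵢⱼ`, indexed by `Fin q₂ ⊕ Fin (k i j)` so that `oᵢⱼ = q₂ + k i j ≥ q₂`)
carries `Bᵢⱼ` against the first column block, `B̊ᵢⱼ` against the level-2 column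
block of group `i`, `B̊̊ᵢⱼ` against the level-3 column block `(i,j)` and zeroes
elsewhere. -/
def threeLevelB {p q₁ q₂ m : ℕ} {n : Fin m → ℕ} {k : (i : Fin m) → Fin (n i) → ℕ}
    (B1 : (i : Fin m) → (j : Fin (n i)) → Matrix (Fin q₂ ⊕ Fin (k i j)) (Fin p) ℝ)
    (B2 : (i : Fin m) → (j : Fin (n i)) → Matrix (Fin q₂ ⊕ Fin (k i j)) (Fin q₁) ℝ)
    (B3 : (i : Fin m) → (j : Fin (n i)) → Matrix (Fin q₂ ⊕ Fin (k i j)) (Fin q₂) ℝ) :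
    Matrix ((i : Fin m) × ((j : Fin (n i)) × (Fin q₂ ⊕ Fin (k i j))))
           (Fin p ⊕ (Σ i : Fin m, Fin q₁ ⊕ (Fin (n i) × Fin q₂))) ℝ :=
  Matrix.of fun x y =>
    match y with
    | Sum.inl a => B1 x.1 x.2.1 x.2.2 a
    | Sum.inr ⟨i, Sum.inl b⟩ => if x.1 = i then B2 x.1 x.2.1 x.2.2 b else 0
    | Sum.inr ⟨i, Sum.inr (j, b)⟩ =>
        if (⟨x.1, x.2.1⟩ : Σ i, Fin (n i)) = ⟨i, j⟩ then B3 x.1 x.2.1 x.2.2 b else 0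

section Defs

variable {p q₁ q₂ m : ℕ} {n : Fin m → ℕ} {k : (i : Fin m) → Fin (n i) → ℕ}

/-- `D₀ᵢⱼ := Qᵢⱼᵀ Bᵢⱼ`. -/
def D0 (Qij : (i : Fin m) → (j : Fin (n i)) →
      Matrix (Fin q₂ ⊕ Fin (k i j)) (Fin q₂ ⊕ Fin (k i j)) ℝ)
    (B1 : (i : Fin m) → (j : Fin (n i)) → Matrix (Fin q₂ ⊕ Fin (k i j)) (Fin p) ℝ)
    (i : Fin m) (j : Fin (n i)) : Matrix (Fin q₂ ⊕ Fin (k i j)) (Fin p) ℝ :=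
  (Qij i j)ᵀ * B1 i j

/-- `D₁ᵢⱼ`: the first `q₂` rows of `D₀ᵢⱼ` (with `B` one of the design blocks). -/
def D1 (Qij : (i : Fin m) → (j : Fin (n i)) →
      Matrix (Fin q₂ ⊕ Fin (k i j)) (Fin q₂ ⊕ Fin (k i j)) ℝ)
    (B1 : (i : Fin m) → (j : Fin (n i)) → Matrix (Fin q₂ ⊕ Fin (k i j)) (Fin p) ℝ)
    (i : Fin m) (j : Fin (n i)) : Matrix (Fin q₂) (Fin p) ℝ :=
  (D0 Qij B1 i j).submatrix Sum.inl id

/-- `D₂ᵢⱼ`: the remaining `oᵢⱼ − q₂` rows of `D₀ᵢⱼ`. -/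
def D2 (Qij : (i : Fin m) → (j : Fin (n i)) →
      Matrix (Fin q₂ ⊕ Fin (k i j)) (Fin q₂ ⊕ Fin (k i j)) ℝ)
    (B1 : (i : Fin m) → (j : Fin (n i)) → Matrix (Fin q₂ ⊕ Fin (k i j)) (Fin p) ℝ)
    (i : Fin m) (j : Fin (n i)) : Matrix (Fin (k i j)) (Fin p) ℝ :=
  (D0 Qij B1 i j).submatrix Sum.inr id

/-- The row-stack over `j` of `D₂ᵢⱼ` (also used for `D̊₂ᵢⱼ`). -/
def stackD2 (Qij : (i : Fin m) → (j : Fin (n i)) →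
      Matrix (Fin q₂ ⊕ Fin (k i j)) (Fin q₂ ⊕ Fin (k i j)) ℝ)
    (B1 : (i : Fin m) → (j : Fin (n i)) → Matrix (Fin q₂ ⊕ Fin (k i j)) (Fin p) ℝ)
    (i : Fin m) : Matrix ((j : Fin (n i)) × Fin (k i j)) (Fin p) ℝ :=
  Matrix.of fun x a => D2 Qij B1 i x.1 x.2 a

/-- `C₀ᵢ := Qᵢᵀ (row-stack over j of D₂ᵢⱼ)`. -/
def C0 {s : Fin m → ℕ}
    (Qi : (i : Fin m) → Matrix ((j : Fin (n i)) × Fin (k i j)) (Fin q₁ ⊕ Fin (s i)) ℝ)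
    (Qij : (i : Fin m) → (j : Fin (n i)) →
      Matrix (Fin q₂ ⊕ Fin (k i j)) (Fin q₂ ⊕ Fin (k i j)) ℝ)
    (B1 : (i : Fin m) → (j : Fin (n i)) → Matrix (Fin q₂ ⊕ Fin (k i j)) (Fin p) ℝ)
    (i : Fin m) : Matrix (Fin q₁ ⊕ Fin (s i)) (Fin p) ℝ :=
  (Qi i)ᵀ * stackD2 Qij B1 i

/-- `C₁ᵢ`: the first `q₁` rows of `C₀ᵢ`. -/
def C1 {s : Fin m → ℕ}
    (Qi : (i : Fin m) → Matrix ((j : Fin (n i)) × Fin (k i j)) (Fin q₁ ⊕ Fin (s i)) ℝ)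
    (Qij : (i : Fin m) → (j : Fin (n i)) →
      Matrix (Fin q₂ ⊕ Fin (k i j)) (Fin q₂ ⊕ Fin (k i j)) ℝ)
    (B1 : (i : Fin m) → (j : Fin (n i)) → Matrix (Fin q₂ ⊕ Fin (k i j)) (Fin p) ℝ)
    (i : Fin m) : Matrix (Fin q₁) (Fin p) ℝ :=
  (C0 Qi Qij B1 i).submatrix Sum.inl id

/-- `C₂ᵢ`: the remaining rows of `C₀ᵢ`. -/
def C2 {s : Fin m → ℕ}
    (Qi : (i : Fin m) → Matrix ((j : Fin (n i)) × Fin (k i j)) (Fin q₁ ⊕ Fin (s i)) ℝ)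
    (Qij : (i : Fin m) → (j : Fin (n i)) →
      Matrix (Fin q₂ ⊕ Fin (k i j)) (Fin q₂ ⊕ Fin (k i j)) ℝ)
    (B1 : (i : Fin m) → (j : Fin (n i)) → Matrix (Fin q₂ ⊕ Fin (k i j)) (Fin p) ℝ)
    (i : Fin m) : Matrix (Fin (s i)) (Fin p) ℝ :=
  (C0 Qi Qij B1 i).submatrix Sum.inr id

/-- The row-stack over `i` of `C₂ᵢ`. -/
def stackC2 {s : Fin m → ℕ}
    (Qi : (i : Fin m) → Matrix ((j : Fin (n i)) × Fin (k i j)) (Fin q₁ ⊕ Fin (s i)) ℝ)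
    (Qij : (i : Fin m) → (j : Fin (n i)) →
      Matrix (Fin q₂ ⊕ Fin (k i j)) (Fin q₂ ⊕ Fin (k i j)) ℝ)
    (B1 : (i : Fin m) → (j : Fin (n i)) → Matrix (Fin q₂ ⊕ Fin (k i j)) (Fin p) ℝ) :
    Matrix ((i : Fin m) × Fin (s i)) (Fin p) ℝ :=
  Matrix.of fun x a => C2 Qi Qij B1 x.1 x.2 a

end Defs

/-!
Let `M` be the square triangular factor assembled from the three QR steps: its rows are
`[R 0 0]` (level 1), `[C₁ᵢ Rᵢ 0]` (group `i`) and `[D₁ᵢⱼ D̊₁ᵢⱼ Rᵢⱼ]` (cell `(i,j)`). Each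
orthogonal factor preserves Gram matrices and splits the rows it acts on into rows of `M` and a
residual that is passed to the next level, so `BᵀB = MᵀM`. Full column rank makes `M`
invertible, hence `X = (MᵀM)⁻¹` satisfies `M X Mᵀ = 1`. On the rows of level 1 and of group `i`,
`M` acts on the corresponding coordinates through the block lower triangular
`L = [[R, 0], [C₁ᵢ, Rᵢ]]`, so the principal block `Y` of `X` on these coordinates satisfies
`L Y Lᵀ = 1`; comparing blocks gives both formulas.
-/

namespace ThreeLevelLS

open Matrix

section LinearAlgebra

def rowSelector (K : Type*) [Zero K] [One K] {κ ι : Type*} [DecidableEq ι] (e : κ → ι) :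
    Matrix κ ι K :=
  (1 : Matrix ι ι K).submatrix e id

variable {K ι κ : Type*}

theorem rowSelector_sumElim [Zero K] [One K] [DecidableEq ι] {α β : Type*} (e₁ : α → ι)
    (e₂ : β → ι) :
    rowSelector K (Sum.elim e₁ e₂) = fromRows (rowSelector K e₁) (rowSelector K e₂) := by
  ext (a | b) c <;> rfl

section Semiring

variable [Semiring K] [Fintype ι] [DecidableEq ι] {γ : Type*}

theorem rowSelector_mul (e : κ → ι) (Y : Matrix ι γ K) :
    rowSelector K e * Y = Y.submatrix e id := by
  ext a c
  simp [rowSelector, mul_apply, one_apply]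

theorem mul_transpose_rowSelector (e : κ → ι) (Y : Matrix γ ι K) :
    Y * (rowSelector K e)ᵀ = Y.submatrix id e := by
  ext a c
  simp [rowSelector, mul_apply, one_apply]

theorem rowSelector_mul_mul_transpose (e : κ → ι) (Y : Matrix ι ι K) :
    rowSelector K e * Y * (rowSelector K e)ᵀ = Y.submatrix e e := by
  rw [rowSelector_mul, mul_transpose_rowSelector, submatrix_submatrix]
  rfl

end Semiring

theorem isUnit_det_of_rank_eq_card [Field K] [Fintype ι] [DecidableEq ι] {A : Matrix ι ι K}
    (h : A.rank = Fintype.card ι) : IsUnit A.det := by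
  have hsurj : Function.Surjective A.mulVecLin := by
    rw [← LinearMap.range_eq_top]
    apply Submodule.eq_top_of_finrank_eq
    rwa [Module.finrank_pi]
  rw [← isUnit_iff_isUnit_det]
  exact mulVec_injective_iff_isUnit.mp (LinearMap.injective_iff_surjective.mpr hsurj)

section CommRing

variable [CommRing K] [Fintype ι] [DecidableEq ι] [Fintype κ] [DecidableEq κ]

theorem mul_inv_transpose_mul_self_mul_transpose_eq_one {M : Matrix ι ι K}
    (h : IsUnit (Mᵀ * M).det) : M * (Mᵀ * M)⁻¹ * Mᵀ = 1 := by
  have hM : IsUnit M.det := by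
    rw [det_mul, det_transpose] at h
    exact isUnit_of_mul_isUnit_left h
  have hMt : IsUnit Mᵀ.det := by rwa [det_transpose]
  rw [Matrix.mul_inv_rev, ← Matrix.mul_assoc, mul_nonsing_inv M hM, Matrix.one_mul,
    nonsing_inv_mul _ hMt]

theorem mul_submatrix_mul_transpose_eq_one {M X : Matrix ι ι K} (hMX : M * X * Mᵀ = 1)
    {f : κ → ι} (hf : Function.Injective f) {L : Matrix κ κ K}
    (hL : M.submatrix f id = L * rowSelector K f) : L * X.submatrix f f * Lᵀ = 1 :=
  calc L * X.submatrix f f * Lᵀ = L * rowSelector K f * X * (L * rowSelector K f)ᵀ := by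
        rw [← rowSelector_mul_mul_transpose, transpose_mul]
        simp only [Matrix.mul_assoc]
    _ = rowSelector K f * (M * X * Mᵀ) * (rowSelector K f)ᵀ := by
        rw [← hL, ← rowSelector_mul, transpose_mul]
        simp only [Matrix.mul_assoc]
    _ = 1 := by rw [hMX, rowSelector_mul_mul_transpose, submatrix_one f hf]

theorem toBlocks_of_fromBlocks_mul_mul_transpose_eq_one {α β : Type*} [Fintype α] [Fintype β]
    [DecidableEq α] [DecidableEq β] {R : Matrix α α K} {C : Matrix β α K} {S : Matrix β β K}
    {Y : Matrix (α ⊕ β) (α ⊕ β) K} (hY : Yᵀ = Y)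
    (h : fromBlocks R 0 C S * Y * (fromBlocks R 0 C S)ᵀ = 1) :
    Y.toBlocks₁₂ = -Y.toBlocks₁₁ * (S⁻¹ * C)ᵀ ∧
      Y.toBlocks₂₂ = S⁻¹ * (Sᵀ⁻¹ - C * Y.toBlocks₁₂) := by
  rw [← fromBlocks_toBlocks Y] at h hY
  rw [fromBlocks_transpose, fromBlocks_inj] at hY
  obtain ⟨hY₁₁, -, hY₂₁, -⟩ := hY
  simp only [fromBlocks_transpose, fromBlocks_multiply, transpose_zero, Matrix.zero_mul,
    Matrix.mul_zero, add_zero, ← fromBlocks_one, fromBlocks_inj] at h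
  obtain ⟨hR, h₁₂, -, h₂₂⟩ := h
  set Y₁₁ := Y.toBlocks₁₁
  set Y₁₂ := Y.toBlocks₁₂
  have hRunit : IsUnit R.det := isUnit_det_of_right_inverse (B := Y₁₁ * Rᵀ) <| by
    rwa [← Matrix.mul_assoc]
  have hW : Y₁₁ * Cᵀ + Y₁₂ * Sᵀ = 0 := by
    have hRW : R * (Y₁₁ * Cᵀ + Y₁₂ * Sᵀ) = 0 := by
      rwa [Matrix.mul_add, ← Matrix.mul_assoc, ← Matrix.mul_assoc]
    simpa [← Matrix.mul_assoc, nonsing_inv_mul R hRunit] using congrArg (R⁻¹ * ·) hRW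
  have hWt : C * Y₁₁ + S * Y.toBlocks₂₁ = 0 := by
    simpa [transpose_add, transpose_mul, hY₁₁, hY₂₁] using congrArg transpose hW
  rw [hWt, Matrix.zero_mul, zero_add] at h₂₂
  have hSunit : IsUnit S.det := by simpa using isUnit_det_of_left_inverse h₂₂
  have hStunit : IsUnit Sᵀ.det := by rwa [det_transpose]
  constructor
  · calc Y₁₂ = Y₁₂ * Sᵀ * Sᵀ⁻¹ := by
          rw [Matrix.mul_assoc, mul_nonsing_inv _ hStunit, Matrix.mul_one]
      _ = -Y₁₁ * (S⁻¹ * C)ᵀ := by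
        rw [eq_neg_of_add_eq_zero_right hW, transpose_mul, transpose_nonsing_inv, Matrix.neg_mul,
          Matrix.neg_mul, Matrix.mul_assoc]
  · rw [inv_eq_left_inv h₂₂, add_sub_cancel_left, ← Matrix.mul_assoc, nonsing_inv_mul _ hSunit,
      Matrix.one_mul]

end CommRing

section Gram

theorem transpose_mul_self_sigma [Semiring K] [Fintype κ] {β : κ → Type*}
    [∀ i, Fintype (β i)] (E : Matrix (Σ i, β i) ι K) :
    Eᵀ * E = ∑ i, (E.submatrix (Sigma.mk i) id)ᵀ * E.submatrix (Sigma.mk i) id := by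
  ext y z
  simp [mul_apply, Matrix.sum_apply, Fintype.sum_sigma]

theorem fromRows_add [Add K] {α₁ α₂ : Type*} (A₁ B₁ : Matrix α₁ ι K)
    (A₂ B₂ : Matrix α₂ ι K) :
    fromRows A₁ A₂ + fromRows B₁ B₂ = fromRows (A₁ + B₁) (A₂ + B₂) := by
  ext (a | a) c <;> rfl

variable {α α₁ α₂ : Type*} [Fintype α] [Fintype α₁] [Fintype α₂]

theorem transpose_mul_eq_of_eq_mul [Semiring K] [DecidableEq κ] [Fintype κ]
    {Q : Matrix α κ K} (hQ : Qᵀ * Q = 1) {E : Matrix α ι K} {F : Matrix κ ι K}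
    (h : E = Q * F) : Qᵀ * E = F := by
  rw [h, ← Matrix.mul_assoc, hQ, Matrix.one_mul]

theorem transpose_mul_self_of_eq_mul [CommSemiring K] [DecidableEq κ] [Fintype κ]
    {Q : Matrix α κ K} (hQ : Qᵀ * Q = 1) {E : Matrix α ι K} {F : Matrix κ ι K}
    (h : E = Q * F) : Eᵀ * E = Fᵀ * F := by
  rw [h, transpose_mul, Matrix.mul_assoc, ← Matrix.mul_assoc Qᵀ, hQ, Matrix.one_mul]

theorem transpose_mul_self_of_mul_eq_fromRows [CommSemiring K] [DecidableEq α]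
    {Q : Matrix α (α₁ ⊕ α₂) K} (hQ : Q * Qᵀ = 1) {E : Matrix α ι K} {F : Matrix α₁ ι K}
    {G : Matrix α₂ ι K} (h : Qᵀ * E = fromRows F G) : Eᵀ * E = Fᵀ * F + Gᵀ * G := by
  rw [← fromCols_mul_fromRows, ← transpose_fromRows, ← h, transpose_mul, transpose_transpose,
    Matrix.mul_assoc, ← Matrix.mul_assoc Q, hQ, Matrix.one_mul]

end Gram

end LinearAlgebra

noncomputable section

abbrev CoefIdx (p q₁ q₂ : ℕ) {m : ℕ} (n : Fin m → ℕ) : Type :=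
  Fin p ⊕ Σ i : Fin m, Fin q₁ ⊕ (Fin (n i) × Fin q₂)

/-- Right multiplication by `selFixed`, `selGroup i`, `selCell i j` places the columns of a block
at the coefficients of level 1, of group `i`, of cell `(i,j)`. The dimensions are explicit
arguments: left to unification, `*` would elaborate to the multiplication of `CStarMatrix`. -/
abbrev selFixed (p q₁ q₂ : ℕ) {m : ℕ} (n : Fin m → ℕ) :
    Matrix (Fin p) (CoefIdx p q₁ q₂ n) ℝ :=
  rowSelector ℝ Sum.inl

abbrev selGroup (p q₁ q₂ : ℕ) {m : ℕ} (n : Fin m → ℕ) (i : Fin m) :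
    Matrix (Fin q₁) (CoefIdx p q₁ q₂ n) ℝ :=
  rowSelector ℝ fun b => Sum.inr ⟨i, Sum.inl b⟩

abbrev selCell (p q₁ q₂ : ℕ) {m : ℕ} (n : Fin m → ℕ) (i : Fin m) (j : Fin (n i)) :
    Matrix (Fin q₂) (CoefIdx p q₁ q₂ n) ℝ :=
  rowSelector ℝ fun b => Sum.inr ⟨i, Sum.inr (j, b)⟩

variable {p q₁ q₂ m t : ℕ} {n : Fin m → ℕ} {k : (i : Fin m) → Fin (n i) → ℕ} {s : Fin m → ℕ}

local notation "E₁" => selFixed p q₁ q₂ n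
local notation "E₂" => selGroup p q₁ q₂ n
local notation "E₃" => selCell p q₁ q₂ n

variable (B1 : (i : Fin m) → (j : Fin (n i)) → Matrix (Fin q₂ ⊕ Fin (k i j)) (Fin p) ℝ)
  (B2 : (i : Fin m) → (j : Fin (n i)) → Matrix (Fin q₂ ⊕ Fin (k i j)) (Fin q₁) ℝ)
  (B3 : (i : Fin m) → (j : Fin (n i)) → Matrix (Fin q₂ ⊕ Fin (k i j)) (Fin q₂) ℝ)
  (Qij : (i : Fin m) → (j : Fin (n i)) →
      Matrix (Fin q₂ ⊕ Fin (k i j)) (Fin q₂ ⊕ Fin (k i j)) ℝ)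
  (Rij : (i : Fin m) → (j : Fin (n i)) → Matrix (Fin q₂) (Fin q₂) ℝ)
  (Qi : (i : Fin m) → Matrix ((j : Fin (n i)) × Fin (k i j)) (Fin q₁ ⊕ Fin (s i)) ℝ)
  (Ri : (i : Fin m) → Matrix (Fin q₁) (Fin q₁) ℝ)
  (Q : Matrix ((i : Fin m) × Fin (s i)) (Fin p ⊕ Fin t) ℝ) (R : Matrix (Fin p) (Fin p) ℝ)

def cellDesign (i : Fin m) (j : Fin (n i)) :
    Matrix (Fin q₂ ⊕ Fin (k i j)) (CoefIdx p q₁ q₂ n) ℝ :=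
  B1 i j * E₁ + B2 i j * E₂ i + B3 i j * E₃ i j

def fixedRows : Matrix (Fin p) (CoefIdx p q₁ q₂ n) ℝ := R * E₁

def groupRows (i : Fin m) : Matrix (Fin q₁) (CoefIdx p q₁ q₂ n) ℝ :=
  C1 Qi Qij B1 i * E₁ + Ri i * E₂ i

def cellRows (i : Fin m) (j : Fin (n i)) : Matrix (Fin q₂) (CoefIdx p q₁ q₂ n) ℝ :=
  D1 Qij B1 i j * E₁ + D1 Qij B2 i j * E₂ i + Rij i j * E₃ i j

def rFactor : Matrix (CoefIdx p q₁ q₂ n) (CoefIdx p q₁ q₂ n) ℝ :=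
  Matrix.of fun
    | .inl a => fixedRows R a
    | .inr ⟨i, .inl a⟩ => groupRows B1 Qij Qi Ri i a
    | .inr ⟨i, .inr (j, a)⟩ => cellRows B1 B2 Qij Rij i j a

def cellResidual (i : Fin m) (j : Fin (n i)) : Matrix (Fin (k i j)) (CoefIdx p q₁ q₂ n) ℝ :=
  D2 Qij B1 i j * E₁ + D2 Qij B2 i j * E₂ i

def stackedCellResidual (i : Fin m) :
    Matrix ((j : Fin (n i)) × Fin (k i j)) (CoefIdx p q₁ q₂ n) ℝ :=
  stackD2 Qij B1 i * E₁ + stackD2 Qij B2 i * E₂ i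

def groupResidual (i : Fin m) : Matrix (Fin (s i)) (CoefIdx p q₁ q₂ n) ℝ :=
  C2 Qi Qij B1 i * E₁

theorem fromRows_D1_D2 {r : ℕ}
    (B : (i : Fin m) → (j : Fin (n i)) → Matrix (Fin q₂ ⊕ Fin (k i j)) (Fin r) ℝ)
    (i : Fin m) (j : Fin (n i)) : fromRows (D1 Qij B i j) (D2 Qij B i j) = (Qij i j)ᵀ * B i j :=
  fromRows_toRows _

theorem fromRows_C1_C2 (i : Fin m) :
    fromRows (C1 Qi Qij B1 i) (C2 Qi Qij B1 i) = (Qi i)ᵀ * stackD2 Qij B1 i :=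
  fromRows_toRows _

variable {B1 B2 B3 Qij Rij Qi Ri Q R}

theorem threeLevelB_submatrix_cell (i : Fin m) (j : Fin (n i)) :
    (threeLevelB B1 B2 B3).submatrix (fun x => ⟨i, j, x⟩) id = cellDesign B1 B2 B3 i j := by
  ext x (a | ⟨i', b | ⟨j', c⟩⟩)
  · simp [threeLevelB, cellDesign, rowSelector, mul_apply, one_apply]
  · obtain rfl | hi := eq_or_ne i i' <;>
      simp [threeLevelB, cellDesign, rowSelector, mul_apply, one_apply, *]
  · obtain rfl | hi := eq_or_ne i i'
    · obtain rfl | hj := eq_or_ne j j' <;>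
        simp [threeLevelB, cellDesign, rowSelector, mul_apply, one_apply, *]
    · simp [threeLevelB, cellDesign, rowSelector, mul_apply, one_apply, hi]

theorem threeLevelB_transpose_mul_self :
    (threeLevelB B1 B2 B3)ᵀ * threeLevelB B1 B2 B3 =
      ∑ i, ∑ j, (cellDesign B1 B2 B3 i j)ᵀ * cellDesign B1 B2 B3 i j := by
  rw [transpose_mul_self_sigma]
  refine Finset.sum_congr rfl fun i _ => ?_
  rw [transpose_mul_self_sigma]
  refine Finset.sum_congr rfl fun j _ => ?_
  rw [submatrix_submatrix, ← threeLevelB_submatrix_cell]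
  rfl

theorem cellDesign_transpose_mul_self (hQij : ∀ i j, (Qij i j)ᵀ * Qij i j = 1)
    (hQij' : ∀ i j, Qij i j * (Qij i j)ᵀ = 1)
    (hQRij : ∀ i j, B3 i j = Qij i j * fromRows (Rij i j) 0) (i : Fin m) (j : Fin (n i)) :
    (cellDesign B1 B2 B3 i j)ᵀ * cellDesign B1 B2 B3 i j =
      (cellRows B1 B2 Qij Rij i j)ᵀ * cellRows B1 B2 Qij Rij i j +
        (cellResidual B1 B2 Qij i j)ᵀ * cellResidual B1 B2 Qij i j := by
  refine transpose_mul_self_of_mul_eq_fromRows (hQij' i j) ?_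
  have hB3 := transpose_mul_eq_of_eq_mul (hQij i j) (hQRij i j)
  simp only [cellDesign, cellRows, cellResidual, Matrix.mul_add, ← Matrix.mul_assoc, hB3,
    ← fromRows_D1_D2, fromRows_mul, fromRows_add, Matrix.zero_mul, add_zero]

theorem sum_cellResidual_transpose_mul_self (i : Fin m) :
    ∑ j, (cellResidual B1 B2 Qij i j)ᵀ * cellResidual B1 B2 Qij i j =
      (stackedCellResidual B1 B2 Qij i)ᵀ * stackedCellResidual B1 B2 Qij i := by
  rw [transpose_mul_self_sigma]
  rfl

theorem stackedCellResidual_transpose_mul_self (hQi : ∀ i, (Qi i)ᵀ * Qi i = 1)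
    (hQi' : ∀ i, Qi i * (Qi i)ᵀ = 1)
    (hQRi : ∀ i, stackD2 Qij B2 i = Qi i * fromRows (Ri i) 0) (i : Fin m) :
    (stackedCellResidual B1 B2 Qij i)ᵀ * stackedCellResidual B1 B2 Qij i =
      (groupRows B1 Qij Qi Ri i)ᵀ * groupRows B1 Qij Qi Ri i +
        (groupResidual B1 Qij Qi i)ᵀ * groupResidual B1 Qij Qi i := by
  refine transpose_mul_self_of_mul_eq_fromRows (hQi' i) ?_
  have hB2 := transpose_mul_eq_of_eq_mul (hQi i) (hQRi i)
  simp only [stackedCellResidual, groupRows, groupResidual, Matrix.mul_add, ← Matrix.mul_assoc,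
    hB2, ← fromRows_C1_C2, fromRows_mul, fromRows_add, Matrix.zero_mul, add_zero]

theorem sum_groupResidual_transpose_mul_self (hQ : Qᵀ * Q = 1)
    (hQR : stackC2 Qi Qij B1 = Q * fromRows R 0) :
    ∑ i, (groupResidual B1 Qij Qi i)ᵀ * groupResidual B1 Qij Qi i =
      (fixedRows R)ᵀ * fixedRows R := by
  have hC2 : ∑ i, (C2 Qi Qij B1 i)ᵀ * C2 Qi Qij B1 i = Rᵀ * R :=
    calc _ = (stackC2 Qi Qij B1)ᵀ * stackC2 Qi Qij B1 := (transpose_mul_self_sigma _).symm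
      _ = (fromRows R 0)ᵀ * fromRows R 0 := transpose_mul_self_of_eq_mul hQ hQR
      _ = Rᵀ * R := by
        rw [transpose_fromRows, fromCols_mul_fromRows, transpose_zero, Matrix.zero_mul, add_zero]
  calc _ = (E₁)ᵀ * (∑ i, (C2 Qi Qij B1 i)ᵀ * C2 Qi Qij B1 i) * E₁ := by
        simp only [groupResidual, transpose_mul, Matrix.mul_sum, Matrix.sum_mul, Matrix.mul_assoc]
    _ = _ := by simp only [hC2, fixedRows, transpose_mul, Matrix.mul_assoc]

theorem rFactor_transpose_mul_self :
    (rFactor B1 B2 Qij Rij Qi Ri R)ᵀ * rFactor B1 B2 Qij Rij Qi Ri R =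
      (fixedRows R)ᵀ * fixedRows R +
        ∑ i, ((groupRows B1 Qij Qi Ri i)ᵀ * groupRows B1 Qij Qi Ri i +
          ∑ j, (cellRows B1 B2 Qij Rij i j)ᵀ * cellRows B1 B2 Qij Rij i j) := by
  ext y z
  simp [mul_apply, Matrix.sum_apply, Fintype.sum_sum_type, Fintype.sum_sigma,
    Fintype.sum_prod_type, rFactor]

theorem threeLevelB_transpose_mul_self_eq_rFactor (hQij : ∀ i j, (Qij i j)ᵀ * Qij i j = 1)
    (hQij' : ∀ i j, Qij i j * (Qij i j)ᵀ = 1)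
    (hQRij : ∀ i j, B3 i j = Qij i j * fromRows (Rij i j) 0)
    (hQi : ∀ i, (Qi i)ᵀ * Qi i = 1) (hQi' : ∀ i, Qi i * (Qi i)ᵀ = 1)
    (hQRi : ∀ i, stackD2 Qij B2 i = Qi i * fromRows (Ri i) 0)
    (hQ : Qᵀ * Q = 1) (hQR : stackC2 Qi Qij B1 = Q * fromRows R 0) :
    (threeLevelB B1 B2 B3)ᵀ * threeLevelB B1 B2 B3 =
      (rFactor B1 B2 Qij Rij Qi Ri R)ᵀ * rFactor B1 B2 Qij Rij Qi Ri R := by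
  rw [threeLevelB_transpose_mul_self, rFactor_transpose_mul_self,
    ← sum_groupResidual_transpose_mul_self hQ hQR, ← Finset.sum_add_distrib]
  refine Finset.sum_congr rfl fun i _ => ?_
  simp only [cellDesign_transpose_mul_self hQij hQij' hQRij, Finset.sum_add_distrib,
    sum_cellResidual_transpose_mul_self, stackedCellResidual_transpose_mul_self hQi hQi' hQRi]
  abel

theorem rFactor_submatrix_fixed_group (i : Fin m) :
    (rFactor B1 B2 Qij Rij Qi Ri R).submatrix
        (Sum.elim Sum.inl fun b => Sum.inr ⟨i, Sum.inl b⟩) id =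
      fromBlocks R 0 (C1 Qi Qij B1 i) (Ri i) *
        rowSelector ℝ (ι := CoefIdx p q₁ q₂ n)
          (Sum.elim Sum.inl fun b => Sum.inr ⟨i, Sum.inl b⟩) := by
  rw [rowSelector_sumElim, fromBlocks_mul_fromRows, Matrix.zero_mul, add_zero]
  ext (a | b) c <;> rfl

end

end ThreeLevelLS

open ThreeLevelLS in
theorem threeLevelLS_inverse_level2_blocks_general {p q₁ q₂ m t : ℕ} {n : Fin m → ℕ}
    {k : (i : Fin m) → Fin (n i) → ℕ} {s : Fin m → ℕ}
    (B1 : (i : Fin m) → (j : Fin (n i)) → Matrix (Fin q₂ ⊕ Fin (k i j)) (Fin p) ℝ)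
    (B2 : (i : Fin m) → (j : Fin (n i)) → Matrix (Fin q₂ ⊕ Fin (k i j)) (Fin q₁) ℝ)
    (B3 : (i : Fin m) → (j : Fin (n i)) → Matrix (Fin q₂ ⊕ Fin (k i j)) (Fin q₂) ℝ)
    (hrank : (threeLevelB B1 B2 B3).rank =
      Fintype.card (Fin p ⊕ (Σ i : Fin m, Fin q₁ ⊕ (Fin (n i) × Fin q₂))))
    (Qij : (i : Fin m) → (j : Fin (n i)) →
      Matrix (Fin q₂ ⊕ Fin (k i j)) (Fin q₂ ⊕ Fin (k i j)) ℝ)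
    (hQij : ∀ i j, (Qij i j)ᵀ * Qij i j = 1) (hQij' : ∀ i j, Qij i j * (Qij i j)ᵀ = 1)
    (Rij : (i : Fin m) → (j : Fin (n i)) → Matrix (Fin q₂) (Fin q₂) ℝ)
    (hQRij : ∀ i j, B3 i j = Qij i j * Matrix.fromRows (Rij i j) 0)
    (Qi : (i : Fin m) → Matrix ((j : Fin (n i)) × Fin (k i j)) (Fin q₁ ⊕ Fin (s i)) ℝ)
    (hQi : ∀ i, (Qi i)ᵀ * Qi i = 1) (hQi' : ∀ i, Qi i * (Qi i)ᵀ = 1)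
    (Ri : (i : Fin m) → Matrix (Fin q₁) (Fin q₁) ℝ)
    (hQRi : ∀ i, stackD2 Qij B2 i = Qi i * Matrix.fromRows (Ri i) 0)
    (Q : Matrix ((i : Fin m) × Fin (s i)) (Fin p ⊕ Fin t) ℝ)
    (hQ : Qᵀ * Q = 1)
    (R : Matrix (Fin p) (Fin p) ℝ)
    (hQR : stackC2 Qi Qij B1 = Q * Matrix.fromRows R 0)
    :
    ∀ i : Fin m,
      (((threeLevelB B1 B2 B3)ᵀ * threeLevelB B1 B2 B3)⁻¹).submatrix
          Sum.inl (fun b => Sum.inr ⟨i, Sum.inl b⟩) =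
        -((((threeLevelB B1 B2 B3)ᵀ * threeLevelB B1 B2 B3)⁻¹).submatrix
            Sum.inl Sum.inl) * ((Ri i)⁻¹ * C1 Qi Qij B1 i)ᵀ ∧
      (((threeLevelB B1 B2 B3)ᵀ * threeLevelB B1 B2 B3)⁻¹).submatrix
          (fun a => Sum.inr ⟨i, Sum.inl a⟩) (fun b => Sum.inr ⟨i, Sum.inl b⟩) =
        (Ri i)⁻¹ * (((Ri i)ᵀ)⁻¹ - C1 Qi Qij B1 i *
          (((threeLevelB B1 B2 B3)ᵀ * threeLevelB B1 B2 B3)⁻¹).submatrix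
            Sum.inl (fun b => Sum.inr ⟨i, Sum.inl b⟩)) := by
  intro i
  set M := rFactor B1 B2 Qij Rij Qi Ri R
  have hA : (threeLevelB B1 B2 B3)ᵀ * threeLevelB B1 B2 B3 = Mᵀ * M :=
    threeLevelB_transpose_mul_self_eq_rFactor hQij hQij' hQRij hQi hQi' hQRi hQ hQR
  have hdet : IsUnit (Mᵀ * M).det := by
    rw [← hA]
    exact isUnit_det_of_rank_eq_card (by rwa [rank_transpose_mul_self])
  have hsymm : ((Mᵀ * M)⁻¹)ᵀ = (Mᵀ * M)⁻¹ := by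
    rw [transpose_nonsing_inv, transpose_mul, transpose_transpose]
  have hf : Function.Injective
      (Sum.elim Sum.inl fun b => Sum.inr ⟨i, Sum.inl b⟩ : Fin p ⊕ Fin q₁ → CoefIdx p q₁ q₂ n) :=
    Sum.inl_injective.sumElim (fun a b h => by cases h; rfl) (fun _ _ => Sum.inl_ne_inr)
  have hMXM := mul_inv_transpose_mul_self_mul_transpose_eq_one hdet
  rw [hA]
  exact toBlocks_of_fromBlocks_mul_mul_transpose_eq_one (by rw [transpose_submatrix, hsymm])
    (mul_submatrix_mul_transpose_eq_one hMXM hf (rFactor_submatrix_fixed_group i))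

theorem threeLevelLS_inverse_level2_blocks {p q₁ q₂ m t : ℕ} {n : Fin m → ℕ}
    {k : (i : Fin m) → Fin (n i) → ℕ} {s : Fin m → ℕ}
    (hp : 0 < p) (hq₁ : 0 < q₁) (hq₂ : 0 < q₂) (hm : 0 < m) (hn : ∀ i, 0 < n i)
    (B1 : (i : Fin m) → (j : Fin (n i)) → Matrix (Fin q₂ ⊕ Fin (k i j)) (Fin p) ℝ)
    (B2 : (i : Fin m) → (j : Fin (n i)) → Matrix (Fin q₂ ⊕ Fin (k i j)) (Fin q₁) ℝ)
    (B3 : (i : Fin m) → (j : Fin (n i)) → Matrix (Fin q₂ ⊕ Fin (k i j)) (Fin q₂) ℝ)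
    (hrank : (threeLevelB B1 B2 B3).rank =
      Fintype.card (Fin p ⊕ (Σ i : Fin m, Fin q₁ ⊕ (Fin (n i) × Fin q₂))))
    (Qij : (i : Fin m) → (j : Fin (n i)) →
      Matrix (Fin q₂ ⊕ Fin (k i j)) (Fin q₂ ⊕ Fin (k i j)) ℝ)
    (hQij : ∀ i j, (Qij i j)ᵀ * Qij i j = 1) (hQij' : ∀ i j, Qij i j * (Qij i j)ᵀ = 1)
    (Rij : (i : Fin m) → (j : Fin (n i)) → Matrix (Fin q₂) (Fin q₂) ℝ)
    (hRijtri : ∀ i j, (Rij i j).BlockTriangular id)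
    (hRij : ∀ i j, IsUnit (Rij i j).det)
    (hQRij : ∀ i j, B3 i j = Qij i j * Matrix.fromRows (Rij i j) 0)
    (Qi : (i : Fin m) → Matrix ((j : Fin (n i)) × Fin (k i j)) (Fin q₁ ⊕ Fin (s i)) ℝ)
    (hQi : ∀ i, (Qi i)ᵀ * Qi i = 1) (hQi' : ∀ i, Qi i * (Qi i)ᵀ = 1)
    (Ri : (i : Fin m) → Matrix (Fin q₁) (Fin q₁) ℝ)
    (hRitri : ∀ i, (Ri i).BlockTriangular id)
    (hRi : ∀ i, IsUnit (Ri i).det)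
    (hQRi : ∀ i, stackD2 Qij B2 i = Qi i * Matrix.fromRows (Ri i) 0)
    (Q : Matrix ((i : Fin m) × Fin (s i)) (Fin p ⊕ Fin t) ℝ)
    (hQ : Qᵀ * Q = 1) (hQ' : Q * Qᵀ = 1)
    (R : Matrix (Fin p) (Fin p) ℝ)
    (hRtri : R.BlockTriangular id) (hR : IsUnit R.det)
    (hQR : stackC2 Qi Qij B1 = Q * Matrix.fromRows R 0)
    :
    ∀ i : Fin m,
      (((threeLevelB B1 B2 B3)ᵀ * threeLevelB B1 B2 B3)⁻¹).submatrix
          Sum.inl (fun b => Sum.inr ⟨i, Sum.inl b⟩) =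
        -((((threeLevelB B1 B2 B3)ᵀ * threeLevelB B1 B2 B3)⁻¹).submatrix
            Sum.inl Sum.inl) * ((Ri i)⁻¹ * C1 Qi Qij B1 i)ᵀ ∧
      (((threeLevelB B1 B2 B3)ᵀ * threeLevelB B1 B2 B3)⁻¹).submatrix
          (fun a => Sum.inr ⟨i, Sum.inl a⟩) (fun b => Sum.inr ⟨i, Sum.inl b⟩) =
        (Ri i)⁻¹ * (((Ri i)ᵀ)⁻¹ - C1 Qi Qij B1 i *
          (((threeLevelB B1 B2 B3)ᵀ * threeLevelB B1 B2 B3)⁻¹).submatrix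
            Sum.inl (fun b => Sum.inr ⟨i, Sum.inl b⟩)) :=
  threeLevelLS_inverse_level2_blocks_general B1 B2 B3 hrank Qij hQij hQij' Rij hQRij Qi hQi hQi' Ri
    hQRi Q hQ R hQR
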